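/- Let Ψ ∈ ℚ((q)) be the expansion of the rational function q/(1+q+q²), i.e. Ψ = q(1−q)/(1−q³) = Σ_{m≥0} (q^{3m+1} − q^{3m+2}). Then for every d ≥ 1, Ψ does not lie in V_d; that is, Ψ is not a finite ℚ-linear combination of the Laurent series ((−q)^r − 2 + (−q)^{−r})^{g−1} with g ≥ 0 and 1 ≤ r ≤ d — even though the rational function q/(1+q+q²) is invariant under q ↔ q^{−1} and has poles only at third roots of unity. -/

import Mathlib

/-!
For `g ≥ 1` the generator `((−q)^r − 2 + (−q)^{−r})^{g−1}` is a Laurent polynomial of degree at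
most `r(g−1)`, while for `g = 0` it is `(−q)^r/(1 − (−q)^r)² = Σ_{k ≥ 1} k (−q)^{rk}`. At a large
prime `p` the only generator with a nonzero coefficient of `q^p` is therefore the one with
`g = 0, r = 1`, whose coefficient is `−p`; so every element of `V_d` has coefficient `A p` at `q^p`
for all large primes `p`, with `A` independent of `p`. The coefficient of `q^p` in `Ψ` is `±1` for
every prime `p > 3`, and `|A| p = 1` cannot hold for two different primes.
-/

open HahnSeries

/-- `(−q)^r − 2 + (−q)^{−r}` as a formal Laurent series over `ℚ`. -/
noncomputable def PhiK (r : ℕ) : LaurentSeries ℚ :=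
  HahnSeries.single (r : ℤ) ((-1 : ℚ) ^ r) - 2 + HahnSeries.single (-(r : ℤ)) ((-1 : ℚ) ^ r)

/-- `Ψ ∈ ℚ((q))`, the Laurent series expansion of the rational function
`q/(1 + q + q²) = q(1−q)/(1−q³) = Σ_{m ≥ 0} (q^{3m+1} − q^{3m+2})`, obtained by inverting
`1 − q³` in the Laurent series field. -/
noncomputable def Psi : LaurentSeries ℚ :=
  (HahnSeries.single (1 : ℤ) (1 : ℚ) - HahnSeries.single (2 : ℤ) (1 : ℚ)) *
    (1 - HahnSeries.single (3 : ℤ) (1 : ℚ))⁻¹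

open Filter

theorem HahnSeries.support_pow_subset_Iic {Γ R : Type*} [AddCommMonoid Γ] [PartialOrder Γ]
    [IsOrderedCancelAddMonoid Γ] [Semiring R] {x : HahnSeries Γ R} {B : Γ}
    (hx : x.support ⊆ Set.Iic B) : ∀ k : ℕ, (x ^ k).support ⊆ Set.Iic (k • B)
  | 0 => by
    intro n hn
    rw [zero_smul, Set.mem_Iic]
    by_contra h
    exact hn (by simp [coeff_one, show n ≠ 0 by rintro rfl; exact h le_rfl])
  | k + 1 => by
    rw [pow_succ, succ_nsmul]
    exact support_mul_subset.trans <|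
      (Set.add_subset_add (support_pow_subset_Iic hx k) hx).trans (Set.Iic_add_Iic_subset _ _)

theorem max_sub_two_mul_max_add_max_of_dvd {r z : ℤ} (hr : 0 < r) (hz : r ∣ z) :
    max (z - r) 0 - 2 * max z 0 + max (z + r) 0 = if z = 0 then r else 0 := by
  rcases lt_trichotomy z 0 with h | rfl | h
  · have := Int.le_of_dvd (neg_pos.2 h) (dvd_neg.2 hz)
    rw [if_neg h.ne]
    omega
  · rw [if_pos rfl]
    omega
  · have := Int.le_of_dvd h hz
    rw [if_neg h.ne']
    omega

def LaurentSeries.linearAtPrimes (R : Type*) [Semiring R] : Submodule R (LaurentSeries R) where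
  carrier := {x | ∃ A : R, ∀ᶠ p : ℕ in atTop, p.Prime → x.coeff (p : ℤ) = A * p}
  zero_mem' := ⟨0, by simp⟩
  add_mem' := by
    rintro x y ⟨A, hA⟩ ⟨B, hB⟩
    refine ⟨A + B, ?_⟩
    filter_upwards [hA, hB] with p hAp hBp hp
    rw [coeff_add, hAp hp, hBp hp, add_mul]
  smul_mem' := by
    rintro c x ⟨A, hA⟩
    refine ⟨c * A, ?_⟩
    filter_upwards [hA] with p hAp hp
    rw [coeff_smul, hAp hp, smul_eq_mul, mul_assoc]

open LaurentSeries

theorem support_PhiK_subset (r : ℕ) : (PhiK r).support ⊆ Set.Iic (r : ℤ) := by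
  intro n hn
  by_contra h
  rw [Set.mem_Iic, not_le] at h
  apply hn
  rw [PhiK, ← map_ofNat C 2, C_apply]
  simp only [coeff_add, coeff_sub, coeff_single]
  rw [if_neg (by omega), if_neg (by omega), if_neg (by omega)]
  ring

theorem PhiK_pow_mem_linearAtPrimes (r k : ℕ) : PhiK r ^ k ∈ linearAtPrimes ℚ := by
  refine ⟨0, ?_⟩
  filter_upwards [eventually_gt_atTop (k * r)] with p hp _
  rw [zero_mul]
  by_contra h
  have := support_pow_subset_Iic (support_PhiK_subset r) k h
  simp only [Set.mem_Iic, nsmul_eq_mul] at this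
  exact_mod_cast (this.trans_lt (by exact_mod_cast hp)).false

theorem coeff_PhiK_mul (r : ℕ) (x : LaurentSeries ℚ) (z : ℤ) :
    (PhiK r * x).coeff z =
      (-1) ^ r * x.coeff (z - r) - 2 * x.coeff z + (-1) ^ r * x.coeff (z + r) := by
  rw [PhiK, add_mul, sub_mul, coeff_add, coeff_sub, coeff_single_mul, coeff_single_mul, two_mul,
    coeff_add, two_mul, sub_neg_eq_add]

def phiKInvCoeff (r : ℕ) (n : ℤ) : ℚ :=
  if (r : ℤ) ∣ n then (-1) ^ n * (max n 0 : ℤ) / r else 0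

theorem bddBelow_support_phiKInvCoeff (r : ℕ) : BddBelow (Function.support (phiKInvCoeff r)) := by
  refine ⟨0, fun n hn => ?_⟩
  by_contra h
  exact hn (by simp [phiKInvCoeff, show max n 0 = 0 by omega])

/-- The expansion `Σ_{k ≥ 1} k (−q)^{rk}` of `(−q)^r/(1 − (−q)^r)²`. -/
noncomputable def phiKInv (r : ℕ) : LaurentSeries ℚ :=
  ofSuppBddBelow (phiKInvCoeff r) (bddBelow_support_phiKInvCoeff r)

theorem PhiK_mul_phiKInv {r : ℕ} (hr : 0 < r) : PhiK r * phiKInv r = 1 := by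
  ext z
  rw [coeff_PhiK_mul, coeff_one]
  simp only [phiKInv, coeff_ofSuppBddBelow, phiKInvCoeff]
  by_cases hz : (r : ℤ) ∣ z
  · rw [if_pos (dvd_sub hz dvd_rfl), if_pos hz, if_pos (dvd_add hz dvd_rfl)]
    have hsub : (-1 : ℚ) ^ r * (-1) ^ (z - r) = (-1) ^ z := by
      rw [← zpow_natCast, ← zpow_add₀ (by norm_num)]
      ring_nf
    have hadd : (-1 : ℚ) ^ r * (-1) ^ (z + r) = (-1) ^ z := by
      rw [← zpow_natCast, ← zpow_add₀ (by norm_num), show (r : ℤ) + (z + r) = z + 2 * r by ring,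
        zpow_add₀ (by norm_num), zpow_mul]
      norm_num
    have hdiff := max_sub_two_mul_max_add_max_of_dvd (by exact_mod_cast hr) hz
    calc _ = (-1 : ℚ) ^ z * (((max (z - r) 0 : ℤ) : ℚ) - 2 * ((max z 0 : ℤ) : ℚ)
            + ((max (z + r) 0 : ℤ) : ℚ)) / r := by
          linear_combination ((max (z - r) 0 : ℤ) : ℚ) / r * hsub
            + ((max (z + r) 0 : ℤ) : ℚ) / r * hadd
      _ = (-1 : ℚ) ^ z * ((max (z - r) 0 - 2 * max z 0 + max (z + r) 0 : ℤ) : ℚ) / r := by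
          push_cast
          ring
      _ = _ := by
          rw [hdiff]
          split_ifs with h0 <;> simp [h0, hr.ne']
  · have hsub : ¬ (r : ℤ) ∣ z - r := fun h => hz (by simpa using dvd_add h (dvd_refl (r : ℤ)))
    have hadd : ¬ (r : ℤ) ∣ z + r := fun h => hz (by simpa using dvd_sub h (dvd_refl (r : ℤ)))
    have hz0 : z ≠ 0 := by rintro rfl; exact hz (dvd_zero _)
    simp only [if_neg hsub, if_neg hz, if_neg hadd, if_neg hz0]
    ring

theorem phiKInv_mem_linearAtPrimes {r : ℕ} (hr : 0 < r) : phiKInv r ∈ linearAtPrimes ℚ := by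
  refine ⟨if r = 1 then -1 else 0, ?_⟩
  filter_upwards [eventually_gt_atTop (r + 2)] with p hrp hp
  have hodd : Odd (p : ℤ) := by exact_mod_cast hp.odd_of_ne_two (by omega)
  by_cases h1 : r = 1
  · subst h1
    simp [phiKInv, phiKInvCoeff, hodd.neg_one_zpow]
  · have hdvd : ¬ (r : ℤ) ∣ p := by
      rw [Int.natCast_dvd_natCast]
      intro h
      rcases hp.eq_one_or_self_of_dvd r h with h | h <;> omega
    simp [phiKInv, phiKInvCoeff, h1, hdvd]

theorem PhiK_zpow_mem_linearAtPrimes {r : ℕ} (hr : 0 < r) (g : ℕ) :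
    PhiK r ^ ((g : ℤ) - 1) ∈ linearAtPrimes ℚ := by
  rcases g with _ | k
  · rw [Nat.cast_zero, zero_sub, zpow_neg_one, inv_eq_of_mul_eq_one_right (PhiK_mul_phiKInv hr)]
    exact phiKInv_mem_linearAtPrimes hr
  · rw [Nat.cast_succ, add_sub_cancel_right, zpow_natCast]
    exact PhiK_pow_mem_linearAtPrimes r k

def psiCoeff (n : ℤ) : ℚ :=
  if 0 < n then if n % 3 = 1 then 1 else if n % 3 = 2 then -1 else 0 else 0

theorem bddBelow_support_psiCoeff : BddBelow (Function.support psiCoeff) := by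
  refine ⟨0, fun n hn => ?_⟩
  by_contra h
  exact hn (by simp [psiCoeff, show ¬ 0 < n by omega])

theorem Psi_eq_ofSuppBddBelow : Psi = ofSuppBddBelow psiCoeff bddBelow_support_psiCoeff := by
  have hunit : (1 - single (3 : ℤ) (1 : ℚ)) ≠ 0 := fun h => by
    simpa using congrArg (coeff · 0) h
  refine ((eq_mul_inv_iff_mul_eq₀ hunit).2 ?_).symm
  ext n
  rw [mul_sub, mul_one, coeff_sub, coeff_mul_single, coeff_sub, coeff_single, coeff_single]
  simp only [coeff_ofSuppBddBelow, psiCoeff]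
  split_ifs <;> norm_num <;> omega

theorem abs_coeff_Psi {n : ℤ} (hn : 0 < n) (h3 : ¬ 3 ∣ n) : |Psi.coeff n| = 1 := by
  rw [Psi_eq_ofSuppBddBelow, coeff_ofSuppBddBelow, psiCoeff]
  split_ifs <;> norm_num
  omega

theorem Psi_not_mem_linearAtPrimes : Psi ∉ linearAtPrimes ℚ := by
  rintro ⟨A, hA⟩
  have hprime : ∀ᶠ p : ℕ in atTop, p.Prime → |A| * p = 1 := by
    filter_upwards [hA, eventually_gt_atTop 3] with p hAp hp3 hp
    have h3 : ¬ 3 ∣ p := fun h => by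
      have := (Nat.prime_dvd_prime_iff_eq Nat.prime_three hp).1 h
      omega
    rw [← abs_coeff_Psi (n := p) (by exact_mod_cast hp.pos) (by exact_mod_cast h3), hAp hp,
      abs_mul, Nat.abs_cast]
  obtain ⟨N, hN⟩ := eventually_atTop.mp hprime
  obtain ⟨p, hNp, hp⟩ := Nat.exists_infinite_primes N
  obtain ⟨p', hpp', hp'⟩ := Nat.exists_infinite_primes (p + 1)
  have hA0 : |A| ≠ 0 := left_ne_zero_of_mul_eq_one (hN p hNp hp)
  have : (p : ℚ) = p' := mul_left_cancel₀ hA0 ((hN p hNp hp).trans (hN p' (by omega) hp').symm)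
  have : p = p' := by exact_mod_cast this
  omega

theorem psi_not_in_Vd_general (d : ℕ) :
    Psi ∉ Submodule.span ℚ
      {x : LaurentSeries ℚ | ∃ (g : ℕ) (r : ℕ), 1 ≤ r ∧ r ≤ d ∧ x = (PhiK r) ^ ((g : ℤ) - 1)} := by
  refine fun h => Psi_not_mem_linearAtPrimes (Submodule.span_le.2 ?_ h)
  rintro x ⟨g, r, hr, -, rfl⟩
  exact PhiK_zpow_mem_linearAtPrimes hr g

/-- **The example of Pandharipande–Thomas**, "Curve counting via stable pairs in the derived
category", showing membership in `V_d` is stronger than `q ↔ q⁻¹` symmetry with poles only at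
roots of unity: for every `d ≥ 1` the expansion `Ψ` of `q/(1+q+q²)` is not a finite `ℚ`-linear
combination of the Laurent series `((−q)^r − 2 + (−q)^{−r})^{g−1}` with `g ≥ 0`, `1 ≤ r ≤ d`. -/
theorem psi_not_in_Vd (d : ℕ) (hd : 1 ≤ d) :
    Psi ∉ Submodule.span ℚ
      {x : LaurentSeries ℚ | ∃ (g : ℕ) (r : ℕ), 1 ≤ r ∧ r ≤ d ∧ x = (PhiK r) ^ ((g : ℤ) - 1)} :=
  psi_not_in_Vd_general d
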